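/- Let ψ(s,y) be a smooth radial-in-y weight and define the formal conjugation P_{0,ψ} = e^ψ(∂_s + H)e^{-ψ} where H = −Δ_y + y². Then P_{0,ψ} = L^r + L^i with self-adjoint part L^r = −Δ_y + y² − ψ_s − |ψ_y|² and skew-adjoint part L^i = ∂_s + ψ_y·∂ + ∂·ψ_y, and the commutator is [L^r, L^i] = ψ_{ss} + 4 ψ_y·ψ_{yy}ψ_y − 4 ∂·ψ_{yy}∂ − 4 y·ψ_y + 4 ψ_y·ψ_{sy} − Δ²ψ. -/

import Mathlib

/-- Partial derivative `∂_i f` on `EuclideanSpace ℝ (Fin n)`. -/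
noncomputable def pd {n : ℕ} (f : EuclideanSpace ℝ (Fin n) → ℝ) (i : Fin n)
    (y : EuclideanSpace ℝ (Fin n)) : ℝ :=
  fderiv ℝ f y (EuclideanSpace.single i 1)

/-- Second partial derivative `∂_i ∂_j f`. -/
noncomputable def hess {n : ℕ} (f : EuclideanSpace ℝ (Fin n) → ℝ) (i j : Fin n)
    (y : EuclideanSpace ℝ (Fin n)) : ℝ :=
  pd (fun z => pd f j z) i y

/-- Laplacian. -/
noncomputable def lap {n : ℕ} (f : EuclideanSpace ℝ (Fin n) → ℝ)
    (y : EuclideanSpace ℝ (Fin n)) : ℝ :=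
  ∑ i : Fin n, hess f i i y


open Real Finset

variable {n : ℕ}

local notation "E" => EuclideanSpace ℝ (Fin n)
local notation "P" => ℝ × EuclideanSpace ℝ (Fin n)


noncomputable def DD {n : ℕ} (v : ℝ × EuclideanSpace ℝ (Fin n))
    (F : ℝ × EuclideanSpace ℝ (Fin n) → ℝ) (p : ℝ × EuclideanSpace ℝ (Fin n)) : ℝ :=
  fderiv ℝ F p v

/-- basis vectors -/
noncomputable def ee {n : ℕ} (i : Fin n) : ℝ × EuclideanSpace ℝ (Fin n) :=
  ((0:ℝ), EuclideanSpace.single i 1)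

noncomputable def e0 {n : ℕ} : ℝ × EuclideanSpace ℝ (Fin n) := ((1:ℝ), 0)

lemma DD_contDiff {v : P} {F : P → ℝ} (hF : ContDiff ℝ (⊤ : ℕ∞) F) :
    ContDiff ℝ (⊤ : ℕ∞) (DD v F) :=
  (hF.fderiv_right (le_refl _)).clm_apply contDiff_const

lemma DD_snd_fderiv {v w : P} {F : P → ℝ} (hF : ContDiff ℝ (⊤ : ℕ∞) F) (p : P) :
    DD v (DD w F) p = fderiv ℝ (fderiv ℝ F) p v w := by
  have hd : DifferentiableAt ℝ (fderiv ℝ F) p :=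
    ((hF.fderiv_right (m := (⊤ : ℕ∞)) (by simp)).differentiable (by simp)).differentiableAt
  have h : DD w F = fun q => (fderiv ℝ F q) w := rfl
  rw [DD, h, fderiv_clm_apply hd (differentiableAt_const w)]
  simp

lemma DD_comm {v w : P} {F : P → ℝ} (hF : ContDiff ℝ (⊤ : ℕ∞) F) (p : P) :
    DD v (DD w F) p = DD w (DD v F) p := by
  rw [DD_snd_fderiv hF, DD_snd_fderiv hF]
  exact hF.contDiffAt.isSymmSndFDerivAt (by rw [minSmoothness_of_isRCLikeNormedField]; exact WithTop.coe_le_coe.mpr (le_top : (2:ℕ∞) ≤ ⊤)) v w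

lemma DD_comm_fun {v w : P} {F : P → ℝ} (hF : ContDiff ℝ (⊤ : ℕ∞) F) :
    DD v (DD w F) = DD w (DD v F) := funext (DD_comm hF)

/-! ### algebraic rules -/

lemma DD_add {v : P} {F G : P → ℝ} (hF : DifferentiableAt ℝ F q) (hG : DifferentiableAt ℝ G q) :
    DD v (fun p => F p + G p) q = DD v F q + DD v G q := by
  rw [DD, fderiv_fun_add hF hG]; rfl

lemma DD_mul {v : P} {q : P} {F G : P → ℝ} (hF : DifferentiableAt ℝ F q)
    (hG : DifferentiableAt ℝ G q) :
    DD v (fun p => F p * G p) q = DD v F q * G q + F q * DD v G q := by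
  rw [DD, fderiv_fun_mul hF hG]; simp [DD]; ring

lemma DD_neg {v : P} {q : P} {F : P → ℝ} :
    DD v (fun p => -(F p)) q = -(DD v F q) := by
  rw [DD, fderiv_fun_neg]; rfl

lemma DD_sub {v : P} {q : P} {F G : P → ℝ} (hF : DifferentiableAt ℝ F q)
    (hG : DifferentiableAt ℝ G q) :
    DD v (fun p => F p - G p) q = DD v F q - DD v G q := by
  rw [DD, fderiv_fun_sub hF hG]; rfl

lemma DD_const_mul {v : P} {q : P} {F : P → ℝ} (hF : DifferentiableAt ℝ F q) (c : ℝ) :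
    DD v (fun p => c * F p) q = c * DD v F q := by
  rw [DD, fderiv_const_mul hF]; rfl

lemma DD_sum {v : P} {q : P} {ι : Type*} {s : Finset ι} {F : ι → P → ℝ}
    (hF : ∀ i ∈ s, DifferentiableAt ℝ (F i) q) :
    DD v (fun p => ∑ i ∈ s, F i p) q = ∑ i ∈ s, DD v (F i) q := by
  rw [DD, fderiv_fun_sum hF]; simp [DD]

lemma DD_exp_neg {v : P} {q : P} {F : P → ℝ} (hF : DifferentiableAt ℝ F q) :
    DD v (fun p => Real.exp (-(F p))) q = -(Real.exp (-(F q)) * DD v F q) := by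
  have h1 : DifferentiableAt ℝ (fun p => -(F p)) q := hF.neg
  rw [DD, fderiv_exp h1, fderiv_fun_neg]
  simp [DD]

/-! ### slicing -/

lemma slice_deriv {F : P → ℝ} (hF : ContDiff ℝ (⊤ : ℕ∞) F) (s : ℝ) (y : E) :
    deriv (fun s' => F (s', y)) s = DD e0 F (s, y) := by
  have hl : HasDerivAt (fun s' : ℝ => ((s', y) : P)) ((1:ℝ), (0:E)) s := by
    have := ((hasDerivAt_id s).prodMk (hasDerivAt_const s y))
    simpa using this
  have hFd : HasFDerivAt F (fderiv ℝ F (s, y)) (s, y) :=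
    (hF.differentiable (by simp) (s, y)).hasFDerivAt
  have := hFd.comp_hasDerivAt s hl
  exact this.deriv

lemma slice_pd {F : P → ℝ} (hF : ContDiff ℝ (⊤ : ℕ∞) F) (s : ℝ) (y : E) (i : Fin n) :
    pd (fun z => F (s, z)) i y = DD (ee i) F (s, y) := by
  have hl : HasFDerivAt (fun z : E => ((s, z) : P)) (ContinuousLinearMap.inr ℝ ℝ E) y :=
    ((hasFDerivAt_const s y).prodMk (hasFDerivAt_id y))
  have hFd : HasFDerivAt F (fderiv ℝ F (s, y)) (s, y) :=
    (hF.differentiable (by simp) (s, y)).hasFDerivAt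
  have := hFd.comp y hl
  show fderiv ℝ (fun z => F (s, z)) y (EuclideanSpace.single i 1) = _
  rw [show (fun z => F (s, z)) = F ∘ Prod.mk s from rfl, this.fderiv]; rfl

lemma slice_hess {F : P → ℝ} (hF : ContDiff ℝ (⊤ : ℕ∞) F) (s : ℝ) (y : E) (i j : Fin n) :
    hess (fun z => F (s, z)) i j y = DD (ee i) (DD (ee j) F) (s, y) := by
  rw [hess]
  have h : (fun z => pd (fun z' => F (s, z')) j z) = fun z => DD (ee j) F (s, z) :=
    funext fun z => slice_pd hF s z j
  rw [h]
  exact slice_pd (DD_contDiff hF) s y i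

lemma slice_lap {F : P → ℝ} (hF : ContDiff ℝ (⊤ : ℕ∞) F) (s : ℝ) (y : E) :
    lap (fun z => F (s, z)) y = ∑ i : Fin n, DD (ee i) (DD (ee i) F) (s, y) := by
  rw [lap]
  exact Finset.sum_congr rfl fun i _ => slice_hess hF s y i i

/-! ### the norm-squared function -/

lemma contDiff_N : ContDiff ℝ (⊤ : ℕ∞) (fun p : P => ‖p.2‖ ^ 2) :=
  (contDiff_norm_sq ℝ).comp contDiff_snd

lemma hasFDerivAt_N (q : P) :
    HasFDerivAt (fun p : P => ‖p.2‖ ^ 2)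
      ((2 • (innerSL ℝ q.2)).comp (ContinuousLinearMap.snd ℝ ℝ E)) q :=
  ((hasStrictFDerivAt_norm_sq q.2).hasFDerivAt).comp q (hasFDerivAt_snd)

lemma DD_N (v : P) (q : P) : DD v (fun p : P => ‖p.2‖ ^ 2) q = 2 * (inner ℝ q.2 v.2 : ℝ) := by
  rw [DD, (hasFDerivAt_N q).fderiv]
  simp [two_smul]
  ring

lemma DD_N_ee (i : Fin n) (q : P) : DD (ee i) (fun p : P => ‖p.2‖ ^ 2) q = 2 * q.2 i := by
  rw [DD_N, ee]
  simp [EuclideanSpace.inner_single_right]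

lemma DD_N_e0 (q : P) : DD e0 (fun p : P => ‖p.2‖ ^ 2) q = 0 := by
  rw [DD_N, e0]
  simp

/-- Self-adjoint part `L^r = −Δ + y² − ψ_s − |ψ_y|²` of the conjugated operator. -/
noncomputable def Lr {n : ℕ} (ψ u : ℝ → EuclideanSpace ℝ (Fin n) → ℝ) (s : ℝ)
    (y : EuclideanSpace ℝ (Fin n)) : ℝ :=
  -(lap (u s) y) + ‖y‖^2 * u s y - (deriv (fun s' => ψ s' y) s) * u s y
    - (∑ i : Fin n, (pd (ψ s) i y)^2) * u s y

/-- Skew-adjoint part `L^i = ∂_s + ψ_y·∂ + ∂·ψ_y = ∂_s + 2ψ_y·∂ + Δψ`. -/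
noncomputable def Li {n : ℕ} (ψ u : ℝ → EuclideanSpace ℝ (Fin n) → ℝ) (s : ℝ)
    (y : EuclideanSpace ℝ (Fin n)) : ℝ :=
  deriv (fun s' => u s' y) s + 2 * ∑ i : Fin n, pd (ψ s) i y * pd (u s) i y
    + lap (ψ s) y * u s y


theorem part1 {n : ℕ} (ψ u : ℝ → EuclideanSpace ℝ (Fin n) → ℝ)
    (hψ : ContDiff ℝ (⊤ : ℕ∞) (fun p : ℝ × EuclideanSpace ℝ (Fin n) => ψ p.1 p.2))
    (hu : ContDiff ℝ (⊤ : ℕ∞) (fun p : ℝ × EuclideanSpace ℝ (Fin n) => u p.1 p.2)) :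
    (∀ (s : ℝ) (y : EuclideanSpace ℝ (Fin n)),
      Real.exp (ψ s y) *
        (deriv (fun s' => Real.exp (-(ψ s' y)) * u s' y) s +
          (-(lap (fun z => Real.exp (-(ψ s z)) * u s z) y) +
            ‖y‖^2 * (Real.exp (-(ψ s y)) * u s y))) =
      Lr ψ u s y + Li ψ u s y) := by
  intro s y
  set Ψ : ℝ × EuclideanSpace ℝ (Fin n) → ℝ := fun p => ψ p.1 p.2 with hΨdef
  set U : ℝ × EuclideanSpace ℝ (Fin n) → ℝ := fun p => u p.1 p.2 with hUdef
  have hΨ : ContDiff ℝ (⊤ : ℕ∞) Ψ := hψ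
  have hU : ContDiff ℝ (⊤ : ℕ∞) U := hu
  have DA : ∀ {F : (ℝ × EuclideanSpace ℝ (Fin n)) → ℝ}, ContDiff ℝ (⊤ : ℕ∞) F →
      ∀ p, DifferentiableAt ℝ F p := fun h p => (h.differentiable (by simp) p)
  set G : ℝ × EuclideanSpace ℝ (Fin n) → ℝ := fun p => Real.exp (-(Ψ p)) * U p with hGdef
  have hG : ContDiff ℝ (⊤ : ℕ∞) G := (hΨ.neg.exp).mul hU
  have hG1 : ∀ v p, DD v G p = Real.exp (-(Ψ p)) * (DD v U p - DD v Ψ p * U p) := by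
    intro v p
    rw [hGdef, DD_mul (DA hΨ.neg.exp p) (DA hU p), DD_exp_neg (DA hΨ p)]
    ring
  have hG2 : ∀ v p, DD v (DD v G) p =
      Real.exp (-(Ψ p)) * (DD v (DD v U) p - DD v (DD v Ψ) p * U p
        - 2 * DD v Ψ p * DD v U p + DD v Ψ p * DD v Ψ p * U p) := by
    intro v p
    have h : DD v G = fun p => Real.exp (-(Ψ p)) * (DD v U p - DD v Ψ p * U p) :=
      funext (hG1 v)
    rw [h, DD_mul (DA hΨ.neg.exp p) (DA (((DD_contDiff hU).sub
        ((DD_contDiff hΨ).mul hU)) : ContDiff ℝ (⊤ : ℕ∞) _) p),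
      DD_exp_neg (DA hΨ p),
      DD_sub (DA (DD_contDiff hU) p) (DA ((DD_contDiff hΨ).mul hU) p),
      DD_mul (DA (DD_contDiff hΨ) p) (DA hU p)]
    ring
  -- rewrite LHS into DD atoms
  rw [show (fun s' => Real.exp (-(ψ s' y)) * u s' y) = (fun s' => G (s', y)) from rfl,
    slice_deriv hG,
    show (fun z => Real.exp (-(ψ s z)) * u s z) = (fun z => G (s, z)) from rfl,
    slice_lap hG]
  -- rewrite RHS into DD atoms
  rw [Lr, Li,
    show u s = (fun z => U (s, z)) from rfl,
    show ψ s = (fun z => Ψ (s, z)) from rfl,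
    show (fun s' => ψ s' y) = (fun s' => Ψ (s', y)) from rfl,
    show (fun s' => u s' y) = (fun s' => U (s', y)) from rfl,
    slice_lap hU, slice_lap hΨ, slice_deriv hΨ, slice_deriv hU]
  simp only [slice_pd hΨ, slice_pd hU]
  rw [hG1, Finset.sum_congr rfl (fun i _ => hG2 (ee i) (s, y)), ← Finset.mul_sum]
  have key : Real.exp (ψ s y) * Real.exp (-(ψ s y)) = 1 := by
    rw [← Real.exp_add]; simp
  have hsum : ∑ i : Fin n, (DD (ee i) (DD (ee i) U) (s,y) - DD (ee i) (DD (ee i) Ψ) (s,y) * U (s,y)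
        - 2 * DD (ee i) Ψ (s,y) * DD (ee i) U (s,y)
        + DD (ee i) Ψ (s,y) * DD (ee i) Ψ (s,y) * U (s,y)) =
      (∑ i : Fin n, DD (ee i) (DD (ee i) U) (s,y))
        - (∑ i : Fin n, DD (ee i) (DD (ee i) Ψ) (s,y)) * U (s,y)
        - 2 * (∑ i : Fin n, DD (ee i) Ψ (s,y) * DD (ee i) U (s,y))
        + (∑ i : Fin n, (DD (ee i) Ψ (s,y))^2) * U (s,y) := by
    rw [Finset.sum_add_distrib, Finset.sum_sub_distrib, Finset.sum_sub_distrib,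
      ← Finset.sum_mul]
    congr 1
    · congr 1
      rw [Finset.mul_sum]
      exact Finset.sum_congr rfl fun i _ => by ring
    · rw [Finset.sum_mul]
      exact Finset.sum_congr rfl fun i _ => by ring
  rw [hsum]
  have hq : Ψ (s, y) = ψ s y := rfl
  have hq2 : U (s, y) = u s y := rfl
  rw [hq, hq2]
  linear_combination (DD e0 U (s,y) - DD e0 Ψ (s,y) * u s y
      - ((∑ i : Fin n, DD (ee i) (DD (ee i) U) (s,y))
        - (∑ i : Fin n, DD (ee i) (DD (ee i) Ψ) (s,y)) * u s y
        - 2 * (∑ i : Fin n, DD (ee i) Ψ (s,y) * DD (ee i) U (s,y))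
        + (∑ i : Fin n, (DD (ee i) Ψ (s,y))^2) * u s y)
      + ‖y‖^2 * u s y) * key


section Part2
variable {n : ℕ} {Ψ U : ℝ × EuclideanSpace ℝ (Fin n) → ℝ}

/-- joint version of `Li ψ u` -/
noncomputable def LiF {n : ℕ} (Ψ U : ℝ × EuclideanSpace ℝ (Fin n) → ℝ)
    (p : ℝ × EuclideanSpace ℝ (Fin n)) : ℝ :=
  DD e0 U p + 2 * ∑ i : Fin n, DD (ee i) Ψ p * DD (ee i) U p
    + (∑ i : Fin n, DD (ee i) (DD (ee i) Ψ) p) * U p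

/-- joint version of `Lr ψ u` -/
noncomputable def LrF {n : ℕ} (Ψ U : ℝ × EuclideanSpace ℝ (Fin n) → ℝ)
    (p : ℝ × EuclideanSpace ℝ (Fin n)) : ℝ :=
  -(∑ i : Fin n, DD (ee i) (DD (ee i) U) p) + ‖p.2‖^2 * U p - DD e0 Ψ p * U p
    - (∑ i : Fin n, (DD (ee i) Ψ p)^2) * U p

lemma LiF_smooth (hΨ : ContDiff ℝ (⊤ : ℕ∞) Ψ) (hU : ContDiff ℝ (⊤ : ℕ∞) U) :
    ContDiff ℝ (⊤ : ℕ∞) (LiF Ψ U) := by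
  unfold LiF
  exact ((DD_contDiff hU).add (contDiff_const.mul
      (ContDiff.sum fun i _ => (DD_contDiff hΨ).mul (DD_contDiff hU)))).add
    ((ContDiff.sum fun i _ => DD_contDiff (DD_contDiff hΨ)).mul hU)

lemma LrF_smooth (hΨ : ContDiff ℝ (⊤ : ℕ∞) Ψ) (hU : ContDiff ℝ (⊤ : ℕ∞) U) :
    ContDiff ℝ (⊤ : ℕ∞) (LrF Ψ U) := by
  unfold LrF
  exact ((((ContDiff.sum fun i _ => DD_contDiff (DD_contDiff hU)).neg).add
      (contDiff_N.mul hU)).sub ((DD_contDiff hΨ).mul hU)).sub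
    ((ContDiff.sum fun i _ => (DD_contDiff hΨ).pow 2).mul hU)

lemma hLi1 (hΨ : ContDiff ℝ (⊤ : ℕ∞) Ψ) (hU : ContDiff ℝ (⊤ : ℕ∞) U) (v : ℝ × EuclideanSpace ℝ (Fin n))
    (p : ℝ × EuclideanSpace ℝ (Fin n)) :
    DD v (LiF Ψ U) p = DD v (DD e0 U) p
      + 2 * ∑ j : Fin n, (DD v (DD (ee j) Ψ) p * DD (ee j) U p
          + DD (ee j) Ψ p * DD v (DD (ee j) U) p)
      + (∑ j : Fin n, DD v (DD (ee j) (DD (ee j) Ψ)) p) * U p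
      + (∑ j : Fin n, DD (ee j) (DD (ee j) Ψ) p) * DD v U p := by
  have DA : ∀ {F : (ℝ × EuclideanSpace ℝ (Fin n)) → ℝ}, ContDiff ℝ (⊤ : ℕ∞) F →
      ∀ q, DifferentiableAt ℝ F q := fun h q => (h.differentiable (by simp) q)
  unfold LiF
  rw [DD_add (DA ((DD_contDiff hU).add (contDiff_const.mul
        (ContDiff.sum fun i _ => (DD_contDiff hΨ).mul (DD_contDiff hU)))) p)
      (DA ((ContDiff.sum fun i _ => DD_contDiff (DD_contDiff hΨ)).mul hU) p),
    DD_add (DA (DD_contDiff hU) p)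
      (DA (contDiff_const.mul (ContDiff.sum fun i _ => (DD_contDiff hΨ).mul (DD_contDiff hU))) p),
    DD_const_mul (DA (ContDiff.sum fun i _ => (DD_contDiff hΨ).mul (DD_contDiff hU)) p),
    DD_sum (fun i _ => DA ((DD_contDiff hΨ).mul (DD_contDiff hU)) p),
    DD_mul (DA (ContDiff.sum fun i _ => DD_contDiff (DD_contDiff hΨ)) p) (DA hU p),
    DD_sum (fun i _ => DA (DD_contDiff (DD_contDiff hΨ)) p),
    Finset.sum_congr rfl (fun i _ => DD_mul (DA (DD_contDiff hΨ) p) (DA (DD_contDiff hU) p))]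
  ring

lemma hLr1 (hΨ : ContDiff ℝ (⊤ : ℕ∞) Ψ) (hU : ContDiff ℝ (⊤ : ℕ∞) U) (v : ℝ × EuclideanSpace ℝ (Fin n))
    (p : ℝ × EuclideanSpace ℝ (Fin n)) :
    DD v (LrF Ψ U) p = -(∑ j : Fin n, DD v (DD (ee j) (DD (ee j) U)) p)
      + DD v (fun r => ‖r.2‖^2) p * U p + ‖p.2‖^2 * DD v U p
      - DD v (DD e0 Ψ) p * U p - DD e0 Ψ p * DD v U p
      - (∑ j : Fin n, 2 * (DD (ee j) Ψ p * DD v (DD (ee j) Ψ) p)) * U p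
      - (∑ j : Fin n, (DD (ee j) Ψ p)^2) * DD v U p := by
  have DA : ∀ {F : (ℝ × EuclideanSpace ℝ (Fin n)) → ℝ}, ContDiff ℝ (⊤ : ℕ∞) F →
      ∀ q, DifferentiableAt ℝ F q := fun h q => (h.differentiable (by simp) q)
  have hsq : (fun p => ∑ i : Fin n, (DD (ee i) Ψ p)^2)
      = fun p => ∑ i : Fin n, DD (ee i) Ψ p * DD (ee i) Ψ p := by
    funext p; exact Finset.sum_congr rfl fun i _ => sq (DD (ee i) Ψ p)
  unfold LrF
  rw [DD_sub (DA ((((ContDiff.sum fun i _ => DD_contDiff (DD_contDiff hU)).neg).add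
        (contDiff_N.mul hU)).sub ((DD_contDiff hΨ).mul hU)) p)
      (DA ((ContDiff.sum fun i _ => (DD_contDiff hΨ).pow 2).mul hU) p),
    DD_sub (DA (((ContDiff.sum fun i _ => DD_contDiff (DD_contDiff hU)).neg).add
        (contDiff_N.mul hU)) p) (DA ((DD_contDiff hΨ).mul hU) p),
    DD_add (DA ((ContDiff.sum fun i _ => DD_contDiff (DD_contDiff hU)).neg) p)
      (DA (contDiff_N.mul hU) p),
    DD_neg,
    DD_sum (fun i _ => DA (DD_contDiff (DD_contDiff hU)) p),
    DD_mul (DA contDiff_N p) (DA hU p),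
    DD_mul (DA (DD_contDiff hΨ) p) (DA hU p),
    DD_mul (DA (ContDiff.sum fun i _ => (DD_contDiff hΨ).pow 2) p) (DA hU p)]
  have h2 : DD v (fun p => ∑ i : Fin n, (DD (ee i) Ψ p)^2) p
      = ∑ j : Fin n, (DD v (DD (ee j) Ψ) p * DD (ee j) Ψ p
          + DD (ee j) Ψ p * DD v (DD (ee j) Ψ) p) := by
    rw [hsq, DD_sum (fun i _ => DA ((DD_contDiff hΨ).mul (DD_contDiff hΨ)) p)]
    exact Finset.sum_congr rfl fun i _ =>
      DD_mul (DA (DD_contDiff hΨ) p) (DA (DD_contDiff hΨ) p)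
  rw [h2, Finset.sum_mul, Finset.sum_mul,
    Finset.sum_congr rfl (fun j (_ : j ∈ Finset.univ) => (by ring :
      (DD v (DD (ee j) Ψ) p * DD (ee j) Ψ p + DD (ee j) Ψ p * DD v (DD (ee j) Ψ) p) * U p
        = 2 * (DD (ee j) Ψ p * DD v (DD (ee j) Ψ) p) * U p)),
    show (∑ j : Fin n, 2 * (DD (ee j) Ψ p * DD v (DD (ee j) Ψ) p)) * U p
      = ∑ j : Fin n, 2 * (DD (ee j) Ψ p * DD v (DD (ee j) Ψ) p) * U p from Finset.sum_mul _ _ _]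
  ring

lemma hLi2 (hΨ : ContDiff ℝ (⊤ : ℕ∞) Ψ) (hU : ContDiff ℝ (⊤ : ℕ∞) U) (v : ℝ × EuclideanSpace ℝ (Fin n))
    (p : ℝ × EuclideanSpace ℝ (Fin n)) :
    DD v (DD v (LiF Ψ U)) p = DD v (DD v (DD e0 U)) p
      + 2 * ∑ j : Fin n, (DD v (DD v (DD (ee j) Ψ)) p * DD (ee j) U p
          + 2 * (DD v (DD (ee j) Ψ) p * DD v (DD (ee j) U) p)
          + DD (ee j) Ψ p * DD v (DD v (DD (ee j) U)) p)
      + (∑ j : Fin n, DD v (DD v (DD (ee j) (DD (ee j) Ψ))) p) * U p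
      + 2 * ((∑ j : Fin n, DD v (DD (ee j) (DD (ee j) Ψ)) p) * DD v U p)
      + (∑ j : Fin n, DD (ee j) (DD (ee j) Ψ) p) * DD v (DD v U) p := by
  have DA : ∀ {F : (ℝ × EuclideanSpace ℝ (Fin n)) → ℝ}, ContDiff ℝ (⊤ : ℕ∞) F →
      ∀ q, DifferentiableAt ℝ F q := fun h q => (h.differentiable (by simp) q)
  have h : DD v (LiF Ψ U) = fun p => DD v (DD e0 U) p
      + 2 * ∑ j : Fin n, (DD v (DD (ee j) Ψ) p * DD (ee j) U p
          + DD (ee j) Ψ p * DD v (DD (ee j) U) p)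
      + (∑ j : Fin n, DD v (DD (ee j) (DD (ee j) Ψ)) p) * U p
      + (∑ j : Fin n, DD (ee j) (DD (ee j) Ψ) p) * DD v U p := funext (hLi1 hΨ hU v)
  have cS : ContDiff ℝ (⊤ : ℕ∞) (fun p => ∑ j : Fin n, (DD v (DD (ee j) Ψ) p * DD (ee j) U p
      + DD (ee j) Ψ p * DD v (DD (ee j) U) p)) :=
    ContDiff.sum fun j _ => ((DD_contDiff (DD_contDiff hΨ)).mul (DD_contDiff hU)).add
      ((DD_contDiff hΨ).mul (DD_contDiff (DD_contDiff hU)))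
  have cP1 : ContDiff ℝ (⊤ : ℕ∞) (fun p => (∑ j : Fin n, DD v (DD (ee j) (DD (ee j) Ψ)) p) * U p) :=
    (ContDiff.sum fun j _ => DD_contDiff (DD_contDiff (DD_contDiff hΨ))).mul hU
  have cP2 : ContDiff ℝ (⊤ : ℕ∞) (fun p => (∑ j : Fin n, DD (ee j) (DD (ee j) Ψ) p) * DD v U p) :=
    (ContDiff.sum fun j _ => DD_contDiff (DD_contDiff hΨ)).mul (DD_contDiff hU)
  rw [h,
    DD_add (DA (((DD_contDiff (DD_contDiff hU)).add (contDiff_const.mul cS)).add cP1) p)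
      (DA cP2 p),
    DD_add (DA ((DD_contDiff (DD_contDiff hU)).add (contDiff_const.mul cS)) p) (DA cP1 p),
    DD_add (DA (DD_contDiff (DD_contDiff hU)) p) (DA (contDiff_const.mul cS) p),
    DD_const_mul (DA cS p),
    DD_sum (fun j _ => DA (((DD_contDiff (DD_contDiff hΨ)).mul (DD_contDiff hU)).add
      ((DD_contDiff hΨ).mul (DD_contDiff (DD_contDiff hU)))) p),
    DD_mul (DA (ContDiff.sum fun j _ => DD_contDiff (DD_contDiff (DD_contDiff hΨ))) p) (DA hU p),
    DD_mul (DA (ContDiff.sum fun j _ => DD_contDiff (DD_contDiff hΨ)) p)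
      (DA (DD_contDiff hU) p),
    DD_sum (fun j _ => DA (DD_contDiff (DD_contDiff (DD_contDiff hΨ))) p),
    DD_sum (fun j _ => DA (DD_contDiff (DD_contDiff hΨ)) p),
    Finset.sum_congr rfl (fun j (_ : j ∈ Finset.univ) =>
      (by rw [DD_add (DA ((DD_contDiff (DD_contDiff hΨ)).mul (DD_contDiff hU)) p)
            (DA ((DD_contDiff hΨ).mul (DD_contDiff (DD_contDiff hU))) p),
          DD_mul (DA (DD_contDiff (DD_contDiff hΨ)) p) (DA (DD_contDiff hU) p),
          DD_mul (DA (DD_contDiff hΨ) p) (DA (DD_contDiff (DD_contDiff hU)) p)] :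
        DD v (fun p => DD v (DD (ee j) Ψ) p * DD (ee j) U p
            + DD (ee j) Ψ p * DD v (DD (ee j) U) p) p
          = (DD v (DD v (DD (ee j) Ψ)) p * DD (ee j) U p
              + DD v (DD (ee j) Ψ) p * DD v (DD (ee j) U) p)
            + (DD v (DD (ee j) Ψ) p * DD v (DD (ee j) U) p
              + DD (ee j) Ψ p * DD v (DD v (DD (ee j) U)) p)))]
  rw [Finset.sum_congr rfl (fun j (_ : j ∈ Finset.univ) => (by ring :
    DD v (DD v (DD (ee j) Ψ)) p * DD (ee j) U p + DD v (DD (ee j) Ψ) p * DD v (DD (ee j) U) p +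
        (DD v (DD (ee j) Ψ) p * DD v (DD (ee j) U) p + DD (ee j) Ψ p * DD v (DD v (DD (ee j) U)) p)
      = DD v (DD v (DD (ee j) Ψ)) p * DD (ee j) U p
          + 2 * (DD v (DD (ee j) Ψ) p * DD v (DD (ee j) U) p)
          + DD (ee j) Ψ p * DD v (DD v (DD (ee j) U)) p))]
  ring

end Part2


lemma Li_eq {n : ℕ} {ψ u : ℝ → EuclideanSpace ℝ (Fin n) → ℝ}
    (hΨ : ContDiff ℝ (⊤ : ℕ∞) (fun p : ℝ × EuclideanSpace ℝ (Fin n) => ψ p.1 p.2))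
    (hU : ContDiff ℝ (⊤ : ℕ∞) (fun p : ℝ × EuclideanSpace ℝ (Fin n) => u p.1 p.2))
    (s : ℝ) (y : EuclideanSpace ℝ (Fin n)) :
    Li ψ u s y = LiF (fun p => ψ p.1 p.2) (fun p => u p.1 p.2) (s, y) := by
  rw [Li, LiF,
    show (fun s' => u s' y) = (fun s' => (fun p : ℝ × EuclideanSpace ℝ (Fin n) => u p.1 p.2) (s', y)) from rfl,
    slice_deriv hU,
    show ψ s = (fun z => (fun p : ℝ × EuclideanSpace ℝ (Fin n) => ψ p.1 p.2) (s, z)) from rfl,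
    show u s = (fun z => (fun p : ℝ × EuclideanSpace ℝ (Fin n) => u p.1 p.2) (s, z)) from rfl,
    slice_lap hΨ]
  simp only [slice_pd hΨ, slice_pd hU]

lemma Lr_eq {n : ℕ} {ψ u : ℝ → EuclideanSpace ℝ (Fin n) → ℝ}
    (hΨ : ContDiff ℝ (⊤ : ℕ∞) (fun p : ℝ × EuclideanSpace ℝ (Fin n) => ψ p.1 p.2))
    (hU : ContDiff ℝ (⊤ : ℕ∞) (fun p : ℝ × EuclideanSpace ℝ (Fin n) => u p.1 p.2))
    (s : ℝ) (y : EuclideanSpace ℝ (Fin n)) :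
    Lr ψ u s y = LrF (fun p => ψ p.1 p.2) (fun p => u p.1 p.2) (s, y) := by
  rw [Lr, LrF,
    show (fun s' => ψ s' y) = (fun s' => (fun p : ℝ × EuclideanSpace ℝ (Fin n) => ψ p.1 p.2) (s', y)) from rfl,
    slice_deriv hΨ,
    show ψ s = (fun z => (fun p : ℝ × EuclideanSpace ℝ (Fin n) => ψ p.1 p.2) (s, z)) from rfl,
    show u s = (fun z => (fun p : ℝ × EuclideanSpace ℝ (Fin n) => u p.1 p.2) (s, z)) from rfl,
    slice_lap hU]
  simp only [slice_pd hΨ]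


theorem part2 {n : ℕ} (ψ u : ℝ → EuclideanSpace ℝ (Fin n) → ℝ)
    (hψ : ContDiff ℝ (⊤ : ℕ∞) (fun p : ℝ × EuclideanSpace ℝ (Fin n) => ψ p.1 p.2))
    (hu : ContDiff ℝ (⊤ : ℕ∞) (fun p : ℝ × EuclideanSpace ℝ (Fin n) => u p.1 p.2)) :
    (∀ (s : ℝ) (y : EuclideanSpace ℝ (Fin n)),
      Lr ψ (fun s' y' => Li ψ u s' y') s y - Li ψ (fun s' y' => Lr ψ u s' y') s y =
        (deriv (deriv (fun s' => ψ s' y)) s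
          + 4 * ∑ i : Fin n, ∑ j : Fin n, pd (ψ s) i y * hess (ψ s) i j y * pd (ψ s) j y
          - 4 * ∑ i : Fin n, y i * pd (ψ s) i y
          + 4 * ∑ i : Fin n, pd (ψ s) i y * pd (fun z => deriv (fun s' => ψ s' z) s) i y
          - lap (fun z => lap (ψ s) z) y) * u s y
        - 4 * ∑ i : Fin n, pd (fun z => ∑ j : Fin n, hess (ψ s) i j z * pd (u s) j z) i y) := by
  intro s y
  set Ψ : ℝ × EuclideanSpace ℝ (Fin n) → ℝ := fun p => ψ p.1 p.2 with hΨdef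
  set U : ℝ × EuclideanSpace ℝ (Fin n) → ℝ := fun p => u p.1 p.2 with hUdef
  have hΨ : ContDiff ℝ (⊤ : ℕ∞) Ψ := hψ
  have hU : ContDiff ℝ (⊤ : ℕ∞) U := hu
  have DA : ∀ {F : (ℝ × EuclideanSpace ℝ (Fin n)) → ℝ}, ContDiff ℝ (⊤ : ℕ∞) F →
      ∀ p, DifferentiableAt ℝ F p := fun h p => (h.differentiable (by simp) p)
  have hLiFs : ContDiff ℝ (⊤ : ℕ∞) (LiF Ψ U) := LiF_smooth hΨ hU
  have hLrFs : ContDiff ℝ (⊤ : ℕ∞) (LrF Ψ U) := LrF_smooth hΨ hU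
  have e1 : (fun s' y' => Li ψ u s' y') = fun s' y' => LiF Ψ U (s', y') :=
    funext fun s' => funext fun y' => Li_eq hΨ hU s' y'
  have e2 : (fun s' y' => Lr ψ u s' y') = fun s' y' => LrF Ψ U (s', y') :=
    funext fun s' => funext fun y' => Lr_eq hΨ hU s' y'
  rw [e1, e2]
  simp only [Lr, Li]
  rw [slice_lap hLiFs, slice_deriv hLrFs,
    show (fun s' => ψ s' y) = (fun s' => Ψ (s', y)) from rfl, slice_deriv hΨ]
  simp only [show ψ s = (fun z => Ψ (s, z)) from rfl, slice_pd hΨ, slice_lap hΨ]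
  simp only [slice_pd hLrFs]
  rw [show deriv (fun s' => Ψ (s', y)) = (fun t => DD e0 Ψ (t, y)) from
      funext fun t => slice_deriv hΨ t y,
    slice_deriv (DD_contDiff hΨ)]
  simp only [slice_hess hΨ]
  simp only [show (fun z => deriv (fun s' => ψ s' z) s) = (fun z => DD e0 Ψ (s, z)) from
      funext fun z => slice_deriv hΨ s z,
    slice_pd (DD_contDiff hΨ)]
  -- bilaplacian
  set G : ℝ × EuclideanSpace ℝ (Fin n) → ℝ := fun p => ∑ i : Fin n, DD (ee i) (DD (ee i) Ψ) p
    with hGdef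
  have hG : ContDiff ℝ (⊤ : ℕ∞) G := ContDiff.sum fun i _ => DD_contDiff (DD_contDiff hΨ)
  rw [show (fun z => ∑ i : Fin n, DD (ee i) (DD (ee i) Ψ) (s, z)) = (fun z => G (s, z)) from rfl,
    slice_lap hG]
  have hGexp : ∀ k : Fin n, DD (ee k) (DD (ee k) G) (s, y)
      = ∑ j : Fin n, DD (ee k) (DD (ee k) (DD (ee j) (DD (ee j) Ψ))) (s, y) := by
    intro k
    have h1 : DD (ee k) G = fun p => ∑ j : Fin n, DD (ee k) (DD (ee j) (DD (ee j) Ψ)) p := by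
      funext p
      rw [hGdef, DD_sum (fun i _ => DA (DD_contDiff (DD_contDiff hΨ)) p)]
    rw [h1, DD_sum (fun i _ => DA (DD_contDiff (DD_contDiff (DD_contDiff hΨ))) (s, y))]
  rw [Finset.sum_congr rfl (fun k (_ : k ∈ Finset.univ) => hGexp k)]
  -- last RHS term
  have hH : ∀ i : Fin n, pd (fun z => ∑ j : Fin n,
        DD (ee i) (DD (ee j) Ψ) (s, z) * pd (u s) j z) i y
      = ∑ j : Fin n, (DD (ee i) (DD (ee i) (DD (ee j) Ψ)) (s, y) * DD (ee j) U (s, y)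
          + DD (ee i) (DD (ee j) Ψ) (s, y) * DD (ee i) (DD (ee j) U) (s, y)) := by
    intro i
    have hHs : ContDiff ℝ (⊤ : ℕ∞) (fun p => ∑ j : Fin n, DD (ee i) (DD (ee j) Ψ) p * DD (ee j) U p) :=
      ContDiff.sum fun j _ => (DD_contDiff (DD_contDiff hΨ)).mul (DD_contDiff hU)
    have hfun : (fun z => ∑ j : Fin n, DD (ee i) (DD (ee j) Ψ) (s, z) * pd (u s) j z)
        = fun z => (fun p => ∑ j : Fin n, DD (ee i) (DD (ee j) Ψ) p * DD (ee j) U p) (s, z) := by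
      funext z
      exact Finset.sum_congr rfl fun j _ => by
        rw [show pd (u s) j z = DD (ee j) U (s, z) from slice_pd hU s z j]
    rw [hfun, slice_pd hHs,
      DD_sum (fun j _ => DA ((DD_contDiff (DD_contDiff hΨ)).mul (DD_contDiff hU)) (s, y))]
    exact Finset.sum_congr rfl fun j _ =>
      DD_mul (DA (DD_contDiff (DD_contDiff hΨ)) (s, y)) (DA (DD_contDiff hU) (s, y))
  simp only [hH]
  -- expansions of the left side
  rw [Finset.sum_congr rfl (fun k (_ : k ∈ Finset.univ) => hLi2 hΨ hU (ee k) (s, y)),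
    hLr1 hΨ hU e0 (s, y)]
  simp only [hLr1 hΨ hU, DD_N_ee, DD_N_e0, LiF, LrF]
  rw [show u s y = U (s, y) from rfl]
  -- normalize the middle ∑ x, a_x * (DD (ee x) LrF) term
  have hx : ∀ x : Fin n,
      DD (ee x) Ψ (s, y) *
        (-∑ j : Fin n, DD (ee x) (DD (ee j) (DD (ee j) U)) (s, y) + 2 * y x * U (s, y)
          + ‖y‖ ^ 2 * DD (ee x) U (s, y) - DD (ee x) (DD e0 Ψ) (s, y) * U (s, y)
          - DD e0 Ψ (s, y) * DD (ee x) U (s, y)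
          - (∑ j : Fin n, 2 * (DD (ee j) Ψ (s, y) * DD (ee x) (DD (ee j) Ψ) (s, y))) * U (s, y)
          - (∑ m : Fin n, DD (ee m) Ψ (s, y) ^ 2) * DD (ee x) U (s, y))
      = -(∑ j : Fin n, DD (ee x) Ψ (s, y) * DD (ee x) (DD (ee j) (DD (ee j) U)) (s, y))
        + 2 * (y x * DD (ee x) Ψ (s, y)) * U (s, y)
        + ‖y‖ ^ 2 * (DD (ee x) Ψ (s, y) * DD (ee x) U (s, y))
        - (DD (ee x) Ψ (s, y) * DD (ee x) (DD e0 Ψ) (s, y)) * U (s, y)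
        - DD e0 Ψ (s, y) * (DD (ee x) Ψ (s, y) * DD (ee x) U (s, y))
        - 2 * ((∑ j : Fin n, DD (ee x) Ψ (s, y) * DD (ee x) (DD (ee j) Ψ) (s, y)
              * DD (ee j) Ψ (s, y)) * U (s, y))
        - (∑ m : Fin n, DD (ee m) Ψ (s, y) ^ 2)
            * (DD (ee x) Ψ (s, y) * DD (ee x) U (s, y)) := by
    intro x
    have j1 : DD (ee x) Ψ (s, y) * ∑ j : Fin n, DD (ee x) (DD (ee j) (DD (ee j) U)) (s, y)
        = ∑ j : Fin n, DD (ee x) Ψ (s, y) * DD (ee x) (DD (ee j) (DD (ee j) U)) (s, y) :=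
      Finset.mul_sum _ _ _
    have j2 : DD (ee x) Ψ (s, y)
          * ∑ j : Fin n, 2 * (DD (ee j) Ψ (s, y) * DD (ee x) (DD (ee j) Ψ) (s, y))
        = 2 * ∑ j : Fin n, DD (ee x) Ψ (s, y) * DD (ee x) (DD (ee j) Ψ) (s, y)
            * DD (ee j) Ψ (s, y) := by
      rw [Finset.mul_sum, Finset.mul_sum]
      exact Finset.sum_congr rfl fun j _ => by ring
    linear_combination (-1 : ℝ) * j1 - U (s, y) * j2
  rw [Finset.sum_congr rfl (fun x (_ : x ∈ Finset.univ) => hx x)]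
  simp only [Finset.sum_add_distrib, Finset.sum_sub_distrib, Finset.sum_neg_distrib,
    ← Finset.mul_sum, ← Finset.sum_mul]
  have CN1 : ∑ x : Fin n, DD (ee x) (DD (ee x) (DD e0 U)) (s, y)
      = ∑ j : Fin n, DD e0 (DD (ee j) (DD (ee j) U)) (s, y) :=
    Finset.sum_congr rfl fun k _ => by
      rw [DD_comm_fun hU, DD_comm (DD_contDiff hU)]
  have CN2 : ∑ x : Fin n, DD (ee x) Ψ (s, y)
        * ∑ i : Fin n, DD (ee x) (DD (ee i) (DD (ee i) U)) (s, y)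
      = ∑ x : Fin n, ∑ j : Fin n, DD (ee j) Ψ (s, y)
        * DD (ee x) (DD (ee x) (DD (ee j) U)) (s, y) := by
    rw [Finset.sum_congr rfl (fun x (_ : x ∈ Finset.univ) => Finset.mul_sum _ _ _),
      Finset.sum_comm]
    exact Finset.sum_congr rfl fun i _ => Finset.sum_congr rfl fun x _ => by
      rw [DD_comm (DD_contDiff hU), DD_comm_fun hU]
  have CN3 : ∑ i : Fin n, (∑ j : Fin n, DD (ee i) (DD (ee j) (DD (ee j) Ψ)) (s, y))
        * DD (ee i) U (s, y)
      = ∑ x : Fin n, ∑ j : Fin n, DD (ee x) (DD (ee x) (DD (ee j) Ψ)) (s, y)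
        * DD (ee j) U (s, y) := by
    rw [Finset.sum_congr rfl (fun i (_ : i ∈ Finset.univ) => Finset.sum_mul _ _ _),
      Finset.sum_comm]
    exact Finset.sum_congr rfl fun j _ => Finset.sum_congr rfl fun i _ => by
      rw [DD_comm (DD_contDiff hΨ), DD_comm_fun hΨ]
  have CN4 : ∑ i : Fin n, DD (ee i) Ψ (s, y) * DD e0 (DD (ee i) Ψ) (s, y)
      = ∑ i : Fin n, DD (ee i) Ψ (s, y) * DD (ee i) (DD e0 Ψ) (s, y) :=
    Finset.sum_congr rfl fun i _ => by rw [DD_comm hΨ]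
  linear_combination (-1 : ℝ) * CN1 + 2 * CN2 - 2 * CN3 + 2 * U (s, y) * CN4

/-- Decomposition `e^ψ(∂_s + H)e^{-ψ} = L^r + L^i` into self-adjoint and skew-adjoint
parts, and the explicit commutator identity
`[L^r, L^i] = ψ_{ss} + 4ψ_y·ψ_{yy}ψ_y − 4∂·ψ_{yy}∂ − 4y·ψ_y + 4ψ_y·ψ_{sy} − Δ²ψ`. -/
theorem stmt_8 {n : ℕ} (ψ u : ℝ → EuclideanSpace ℝ (Fin n) → ℝ)
    (hψ : ContDiff ℝ (⊤ : ℕ∞) (fun p : ℝ × EuclideanSpace ℝ (Fin n) => ψ p.1 p.2))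
    (hrad : ∀ s, ∀ y y' : EuclideanSpace ℝ (Fin n), ‖y‖ = ‖y'‖ → ψ s y = ψ s y')
    (hu : ContDiff ℝ (⊤ : ℕ∞) (fun p : ℝ × EuclideanSpace ℝ (Fin n) => u p.1 p.2)) :
    (∀ (s : ℝ) (y : EuclideanSpace ℝ (Fin n)),
      Real.exp (ψ s y) *
        (deriv (fun s' => Real.exp (-(ψ s' y)) * u s' y) s +
          (-(lap (fun z => Real.exp (-(ψ s z)) * u s z) y) +
            ‖y‖^2 * (Real.exp (-(ψ s y)) * u s y))) =
      Lr ψ u s y + Li ψ u s y) ∧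
    (∀ (s : ℝ) (y : EuclideanSpace ℝ (Fin n)),
      Lr ψ (fun s' y' => Li ψ u s' y') s y - Li ψ (fun s' y' => Lr ψ u s' y') s y =
        (deriv (deriv (fun s' => ψ s' y)) s
          + 4 * ∑ i : Fin n, ∑ j : Fin n, pd (ψ s) i y * hess (ψ s) i j y * pd (ψ s) j y
          - 4 * ∑ i : Fin n, y i * pd (ψ s) i y
          + 4 * ∑ i : Fin n, pd (ψ s) i y * pd (fun z => deriv (fun s' => ψ s' z) s) i y
          - lap (fun z => lap (ψ s) z) y) * u s y
        - 4 * ∑ i : Fin n, pd (fun z => ∑ j : Fin n, hess (ψ s) i j z * pd (u s) j z) i y) := by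
  exact ⟨part1 ψ u hψ hu, part2 ψ u hψ hu⟩
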